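/- In the complete expansion G = K[C5](m1,...,m5) with cliques V1,...,V5, if V1 ∪ V2 is a maximum clique, then |V3| <= |V1|, |V5| <= |V2|, and if additionally |V(G)| <= 2·omega(G) then |V3| + |V4| + |V5| <= omega(G). -/

import Mathlib

open SimpleGraph Finset

/-- `G` contains an induced copy of `H`. -/
def HasInducedCopy {V W : Type*} (G : SimpleGraph V) (H : SimpleGraph W) : Prop :=
  ∃ f : W ↪ V, ∀ a b, G.Adj (f a) (f b) ↔ H.Adj a b

/-- The cycle on `ZMod n` (for `n ≥ 3`). -/
def cyc (n : ℕ) : SimpleGraph (ZMod n) where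
  Adj i j := i ≠ j ∧ (i = j + 1 ∨ j = i + 1)
  symm := ⟨fun i j h => ⟨h.1.symm, h.2.symm⟩⟩
  loopless := ⟨fun i h => h.1 rfl⟩

/-- Kite: diamond (K4 minus an edge) plus a pendant vertex adjacent to a degree-3 vertex. -/
def kite : SimpleGraph (Fin 5) :=
  SimpleGraph.fromEdgeSet {s(0,1), s(0,2), s(1,2), s(1,3), s(2,3), s(1,4)}

/-- Bull: triangle with two pendant edges at distinct vertices. -/
def bull : SimpleGraph (Fin 5) :=
  SimpleGraph.fromEdgeSet {s(0,1), s(0,2), s(1,2), s(0,3), s(1,4)}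

/-- Independent expansion of the cycle `C_n`. -/
def indExp (n : ℕ) (m : ZMod n → ℕ) : SimpleGraph (Σ i : ZMod n, Fin (m i)) where
  Adj x y := x.1 ≠ y.1 ∧ (x.1 = y.1 + 1 ∨ y.1 = x.1 + 1)
  symm := ⟨fun x y h => ⟨h.1.symm, h.2.symm⟩⟩
  loopless := ⟨fun x h => h.1 rfl⟩

/-- Complete expansion of the cycle `C_n`. -/
def compExp (n : ℕ) (m : ZMod n → ℕ) : SimpleGraph (Σ i : ZMod n, Fin (m i)) where
  Adj x y := (x.1 = y.1 ∧ x ≠ y) ∨ (x.1 ≠ y.1 ∧ (x.1 = y.1 + 1 ∨ y.1 = x.1 + 1))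
  symm := by
    refine ⟨?_⟩; rintro x y (⟨h, hne⟩ | ⟨h, h2⟩)
    · exact Or.inl ⟨h.symm, hne.symm⟩
    · exact Or.inr ⟨h.symm, h2.symm⟩
  loopless := by refine ⟨?_⟩; rintro x (⟨_, hne⟩ | ⟨h, _⟩); exacts [hne rfl, h rfl]

/-- Distance from a vertex to a set of vertices. -/
noncomputable def distToSet {V : Type*} (G : SimpleGraph V) (S : Set V) (x : V) : ℕ :=
  sInf ((fun y => G.dist x y) '' S)

theorem ZMod.self_ne_add_one {n : ℕ} (hn : n ≠ 1) (i : ZMod n) : i ≠ i + 1 :=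
  fun h => hn (ZMod.one_eq_zero_iff.mp (left_eq_add.mp h))

namespace compExp

variable {n : ℕ} {m : ZMod n → ℕ}

theorem adj_of_fst_eq {x y : Σ i : ZMod n, Fin (m i)} (h : x.1 = y.1) (hxy : x ≠ y) :
    (compExp n m).Adj x y :=
  Or.inl ⟨h, hxy⟩

theorem adj_of_fst_eq_add_one (hn : n ≠ 1) {x y : Σ i : ZMod n, Fin (m i)}
    (h : y.1 = x.1 + 1) : (compExp n m).Adj x y :=
  Or.inr ⟨h ▸ ZMod.self_ne_add_one hn x.1, Or.inr h⟩

theorem isClique_sigma_pair (hn : n ≠ 1) (i : ZMod n) :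
    (compExp n m).IsClique
      ((({i, i + 1} : Finset (ZMod n)).sigma fun _ => univ : Finset (Σ j, Fin (m j))) :
        Set (Σ j, Fin (m j))) := by
  intro x hx y hy hxy
  simp only [coe_sigma, Set.mem_sigma_iff, coe_insert, coe_singleton, Set.mem_insert_iff,
    Set.mem_singleton_iff, coe_univ, Set.mem_univ, and_true] at hx hy
  rcases hx with hx | hx <;> rcases hy with hy | hy
  · exact adj_of_fst_eq (hx.trans hy.symm) hxy
  · exact adj_of_fst_eq_add_one hn (by rw [hx, hy])
  · exact (adj_of_fst_eq_add_one hn (by rw [hx, hy])).symm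
  · exact adj_of_fst_eq (hx.trans hy.symm) hxy

theorem add_le_cliqueNum [NeZero n] (hn : n ≠ 1) (i : ZMod n) :
    m i + m (i + 1) ≤ (compExp n m).cliqueNum := by
  have hcard : (({i, i + 1} : Finset (ZMod n)).sigma fun j => (univ : Finset (Fin (m j)))).card
      = m i + m (i + 1) := by
    simp only [card_sigma, sum_pair (ZMod.self_ne_add_one hn i), card_univ, Fintype.card_fin]
  exact hcard ▸ (isClique_sigma_pair hn i).card_le_cliqueNum

end compExp

theorem stmt_19_general (m : ZMod 5 → ℕ)
    (hmax : (compExp 5 m).cliqueNum = m 0 + m 1) :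
    m 2 ≤ m 0 ∧ m 4 ≤ m 1 ∧
      ((∑ i : ZMod 5, m i) ≤ 2 * (compExp 5 m).cliqueNum →
        m 2 + m 3 + m 4 ≤ (compExp 5 m).cliqueNum) := by
  have h12 : m 1 + m 2 ≤ m 0 + m 1 := hmax ▸ compExp.add_le_cliqueNum (by norm_num) 1
  have h40 : m 4 + m 0 ≤ m 0 + m 1 := hmax ▸ compExp.add_le_cliqueNum (by norm_num) 4
  have hsum : ∑ i : ZMod 5, m i = m 0 + m 1 + m 2 + m 3 + m 4 := Fin.sum_univ_five m
  refine ⟨by omega, by omega, fun h => ?_⟩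
  rw [hsum, hmax] at h
  omega

theorem stmt_19 (m : ZMod 5 → ℕ) (hm : ∀ i, 0 < m i)
    (hmax : (compExp 5 m).cliqueNum = m 0 + m 1) :
    m 2 ≤ m 0 ∧ m 4 ≤ m 1 ∧
      ((∑ i : ZMod 5, m i) ≤ 2 * (compExp 5 m).cliqueNum →
        m 2 + m 3 + m 4 ≤ (compExp 5 m).cliqueNum) :=
  stmt_19_general m hmax
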